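/- arXiv:1605.03992 — 4 statements merged into one kernel-verified Lean document; each statement's English description precedes it below -/
import Mathlib

section
/- Let n_x, n_y ≥ 1 be natural numbers and N = n_x + n_y. For a permutation π of {1,...,N}, define the distance d(π) = n_x − |{i ∈ {1,...,n_x} : π(i) ≤ n_x}|. Then for every m with 0 ≤ m ≤ min(n_x, n_y), the number of permutations π of {1,...,N} with d(π) = m equals C(n_x, m) · C(n_y, m) · n_x! · n_y!, where C(n, k) denotes the binomial coefficient. -/
open Finset

/-- Distance between a permutation and the observed ordering: the number of the
first `nx` indices that `π` maps outside the first `nx` positions. -/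
def pdist (nx ny : ℕ) (π : Equiv.Perm (Fin (nx + ny))) : ℕ :=
  nx - (Finset.univ.filter (fun i : Fin nx => ((π (Fin.castAdd ny i)) : ℕ) < nx)).card

/-- The partition `Π(m)`: the set of permutations at distance `m`. -/
def PartM (nx ny m : ℕ) : Finset (Equiv.Perm (Fin (nx + ny))) :=
  Finset.univ.filter (fun π => pdist nx ny π = m)

/-- Expectation of `f` under the uniform distribution on a finite set `s`. -/
noncomputable def uexp {α : Type*} (s : Finset α) (f : α → ℝ) : ℝ :=
  (∑ a ∈ s, f a) / s.card

/-- Variance of `f` under the uniform distribution on a finite set `s`. -/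
noncomputable def fvar {α : Type*} (s : Finset α) (f : α → ℝ) : ℝ :=
  uexp s (fun a => (f a - uexp s f) ^ 2)

/-- Covariance of `f` and `g` under the uniform distribution on a finite set `s`. -/
noncomputable def fcov {α : Type*} (s : Finset α) (f g : α → ℝ) : ℝ :=
  uexp s (fun a => (f a - uexp s f) * (g a - uexp s g))

/-- Indicator that observation `i` of group x is exchanged out of group x under `π`. -/
def deltaX (nx ny : ℕ) (π : Equiv.Perm (Fin (nx + ny))) (i : Fin nx) : ℝ :=
  if nx ≤ ((π (Fin.castAdd ny i)) : ℕ) then 1 else 0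

/-- Indicator that observation `j` of group y is exchanged into group x under `π`. -/
def deltaY (nx ny : ℕ) (π : Equiv.Perm (Fin (nx + ny))) (j : Fin ny) : ℝ :=
  if ((π (Fin.natAdd nx j)) : ℕ) < nx then 1 else 0

/-- Sum of the x-observations exchanged out of group x. -/
noncomputable def Wx (nx ny : ℕ) (x : Fin nx → ℝ) (π : Equiv.Perm (Fin (nx + ny))) : ℝ :=
  ∑ i : Fin nx, deltaX nx ny π i * x i

/-- Sum of the y-observations exchanged into group x. -/
noncomputable def Wy (nx ny : ℕ) (y : Fin ny → ℝ) (π : Equiv.Perm (Fin (nx + ny))) : ℝ :=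
  ∑ j : Fin ny, deltaY nx ny π j * y j

/-- Mean of the first `nx` entries of the permuted dataset `z*` (where `z*_{π i} = z i`). -/
noncomputable def xstar (nx ny : ℕ) (z : Fin (nx + ny) → ℝ) (π : Equiv.Perm (Fin (nx + ny))) : ℝ :=
  (∑ i : Fin nx, z (π.symm (Fin.castAdd ny i))) / nx

/-- Mean of the last `ny` entries of the permuted dataset `z*` (where `z*_{π i} = z i`). -/
noncomputable def ystar (nx ny : ℕ) (z : Fin (nx + ny) → ℝ) (π : Equiv.Perm (Fin (nx + ny))) : ℝ :=
  (∑ j : Fin ny, z (π.symm (Fin.natAdd nx j))) / ny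

/-- `W(π) = W_y(π) - W_x(π)` computed from the pooled data `z`. -/
noncomputable def WZ (nx ny : ℕ) (z : Fin (nx + ny) → ℝ) (π : Equiv.Perm (Fin (nx + ny))) : ℝ :=
  (∑ j : Fin ny, deltaY nx ny π j * z (Fin.natAdd nx j))
    - (∑ i : Fin nx, deltaX nx ny π i * z (Fin.castAdd ny i))

/-!
Sort the permutations `π` by the image `t = π X` of the first block `X`. A permutation with
`π X = t` is a pair of bijections `X ≃ t` and `Xᶜ ≃ tᶜ`, so each `t` carries `n_x! n_y!` of them.
The distance of `π` is `#(t \ X)`, which equals `#(X \ t)` since `#t = #X`, and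
`t ↦ (X \ t, t \ X)` is a bijection from the admissible `t` onto pairs of `m`-subsets of `X`
and of `Xᶜ`.
-/

open Nat

namespace Equiv

variable {α β : Type*} {p : α → Prop} {q : β → Prop} [DecidablePred p] [DecidablePred q]

def subtypeIffEquivProd :
    {e : α ≃ β // ∀ x, p x ↔ q (e x)} ≃
      ({x // p x} ≃ {y // q y}) × ({x // ¬p x} ≃ {y // ¬q y}) where
  toFun e := (e.1.subtypeEquiv e.2, e.1.subtypeEquiv fun x => not_congr (e.2 x))
  invFun f := ⟨(sumCompl p).symm.trans ((sumCongr f.1 f.2).trans (sumCompl q)), fun x => by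
    by_cases hx : p x
    · simpa [sumCompl_symm_apply_of_pos, hx] using (f.1 ⟨x, hx⟩).2
    · simpa [sumCompl_symm_apply_of_neg, hx] using (f.2 ⟨x, hx⟩).2⟩
  left_inv e := by
    ext x
    by_cases hx : p x <;> simp [sumCompl_symm_apply_of_pos, sumCompl_symm_apply_of_neg, hx]
  right_inv f := by
    ext x <;> simp [sumCompl_symm_apply_of_pos, sumCompl_symm_apply_of_neg, x.2]

end Equiv

namespace Finset

theorem map_perm_eq_iff {α : Type*} {π : Equiv.Perm α} {s t : Finset α} :
    s.map π.toEmbedding = t ↔ ∀ x, x ∈ s ↔ π x ∈ t := by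
  simp only [Finset.ext_iff, mem_map_equiv]
  exact ⟨fun h x => by simpa using h (π x), fun h y => by simpa using h (π.symm y)⟩

theorem card_filter_notMem_eq_card_map_sdiff {α : Type*} [DecidableEq α] (π : Equiv.Perm α)
    (s : Finset α) : #{x ∈ s | π x ∉ s} = #(s.map π.toEmbedding \ s) := by
  rw [← card_map π.toEmbedding, map_filter]
  congr 1
  ext y
  simp [mem_map_equiv]

variable {α : Type*} [Fintype α] [DecidableEq α]

theorem card_perm_map_eq {s t : Finset α} (h : #s = #t) :
    #{π : Equiv.Perm α | s.map π.toEmbedding = t} = (#s)! * (#sᶜ)! := by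
  simp_rw [map_perm_eq_iff, ← Fintype.card_subtype]
  rw [Fintype.card_congr Equiv.subtypeIffEquivProd,
    Fintype.card_prod, Fintype.card_equiv (Fintype.equivOfCardEq (by simpa using h)),
    Fintype.card_equiv (Fintype.equivOfCardEq (by simp [h]))]
  simp [card_compl]

theorem card_filter_card_sdiff_eq_card_sdiff_eq (s : Finset α) (m : ℕ) :
    #{t : Finset α | #(s \ t) = m ∧ #(t \ s) = m} = (#s).choose m * (#sᶜ).choose m := by
  have hinv : ∀ A B : Finset α, A ⊆ s → B ⊆ sᶜ →
      s \ (s \ A ∪ B) = A ∧ (s \ A ∪ B) \ s = B := by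
    simp only [subset_iff, mem_compl]
    grind
  rw [← card_powersetCard, ← card_powersetCard, ← card_product]
  refine card_nbij' (fun t => (s \ t, t \ s)) (fun p => (s \ p.1) ∪ p.2) ?_ ?_ ?_ ?_
  · intro t ht
    simp_all [mem_powersetCard, subset_iff]
  · rintro ⟨A, B⟩ hAB
    simp only [coe_product, Set.mem_prod, mem_coe, mem_powersetCard] at hAB
    obtain ⟨⟨hA, rfl⟩, hB, hcard⟩ := hAB
    simp [hinv A B hA hB, hcard]
  · intro t _
    grind
  · rintro ⟨A, B⟩ hAB
    simp only [coe_product, Set.mem_prod, mem_coe, mem_powersetCard] at hAB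
    simp [hinv A B hAB.1.1 hAB.2.1]

theorem card_perm_card_filter_notMem_eq (s : Finset α) (m : ℕ) :
    #{π : Equiv.Perm α | #{x ∈ s | π x ∉ s} = m}
      = (#s).choose m * (#sᶜ).choose m * (#s)! * (#sᶜ)! := by
  set T : Finset (Finset α) := {t | #(s \ t) = m ∧ #(t \ s) = m}
  have hmem : ∀ π : Equiv.Perm α, s.map π.toEmbedding ∈ T ↔ #{x ∈ s | π x ∉ s} = m := by
    intro π
    rw [card_filter_notMem_eq_card_map_sdiff, mem_filter,
      card_sdiff_comm (card_map π.toEmbedding).symm]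
    simp
  have hfiber : ∀ t ∈ T,
      #{π ∈ ({π | #{x ∈ s | π x ∉ s} = m} : Finset (Equiv.Perm α)) | s.map π.toEmbedding = t}
        = (#s)! * (#sᶜ)! := by
    intro t ht
    obtain ⟨hst, hts⟩ := (mem_filter.1 ht).2
    have hcard : #s = #t := card_sdiff_eq_card_sdiff_iff.1 (hst.trans hts.symm)
    rw [filter_filter, ← card_perm_map_eq hcard]
    congr 1
    ext π
    simp only [mem_filter, mem_univ, true_and, and_iff_right_iff_imp]
    rintro rfl
    exact (hmem π).1 ht
  rw [card_eq_sum_card_fiberwise (f := fun π => s.map π.toEmbedding) (t := T)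
    (fun π hπ => (hmem π).2 (mem_filter.1 hπ).2), sum_congr rfl hfiber, sum_const, smul_eq_mul,
    card_filter_card_sdiff_eq_card_sdiff_eq]
  ring

end Finset

def firstBlock (nx ny : ℕ) : Finset (Fin (nx + ny)) := {k | (k : ℕ) < nx}

theorem card_firstBlock (nx ny : ℕ) : #(firstBlock nx ny) = nx := by
  simp [firstBlock, Fin.card_filter_val_lt]

theorem card_compl_firstBlock (nx ny : ℕ) : #(firstBlock nx ny)ᶜ = ny := by
  simp [card_compl, card_firstBlock]

theorem pdist_eq_card_filter_notMem (nx ny : ℕ) (π : Equiv.Perm (Fin (nx + ny))) :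
    pdist nx ny π = #{k ∈ firstBlock nx ny | π k ∉ firstBlock nx ny} := by
  have hstay : #{i : Fin nx | ((π (Fin.castAdd ny i)) : ℕ) < nx}
      = #{k ∈ firstBlock nx ny | π k ∈ firstBlock nx ny} := by
    rw [firstBlock, filter_filter, card_filter, card_filter, Fin.sum_univ_add]
    simp
  have hsplit :=
    card_filter_add_card_filter_not (s := firstBlock nx ny) (fun k => π k ∈ firstBlock nx ny)
  rw [card_firstBlock] at hsplit
  rw [pdist, hstay]
  omega

theorem partition_card_general (nx ny : ℕ) (m : ℕ) :
    (PartM nx ny m).card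
      = Nat.choose nx m * Nat.choose ny m * Nat.factorial nx * Nat.factorial ny := by
  simp only [PartM, pdist_eq_card_filter_notMem]
  rw [card_perm_card_filter_notMem_eq, card_firstBlock, card_compl_firstBlock]

/-- the number of permutations at distance `m` equals
`C(nx, m) * C(ny, m) * nx! * ny!`. -/
theorem partition_card (nx ny : ℕ) (hx : 1 ≤ nx) (hy : 1 ≤ ny)
    (m : ℕ) (hm : m ≤ min nx ny) :
    (PartM nx ny m).card
      = Nat.choose nx m * Nat.choose ny m * Nat.factorial nx * Nat.factorial ny :=
  partition_card_general nx ny m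
end

section
/- (Zero covariance of the two exchange sums.) Let n_x, n_y ≥ 1, N = n_x + n_y, fix real data vectors x = (x_1,...,x_{n_x}) and y = (y_1,...,y_{n_y}), and fix m with 0 ≤ m ≤ min(n_x, n_y). Let π be uniform on Π(m), and define W_x(π) = Σ_i δ_{x,i} x_i and W_y(π) = Σ_j δ_{y,j} y_j. Then E[W_x · W_y] = E[W_x] · E[W_y]; that is, Cov(W_x, W_y) = 0. -/
open Finset

/-!
Relabelling the observations within each group, i.e. multiplying `π` on the right by a
block-diagonal permutation, preserves the distance and hence permutes `Π(m)`. So the totals of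
`δ_{x,i}`, of `δ_{y,j}` and of `δ_{x,i} δ_{y,j}` over `Π(m)` do not depend on `i` and `j`.
Every `π ∈ Π(m)` has `∑ i, δ_{x,i} = ∑ j, δ_{y,j} = m`, as many observations entering group x
as leaving it; averaging over `i` and `j` gives `E[δ_{x,i}] = m / n_x`, `E[δ_{y,j}] = m / n_y`
and `E[δ_{x,i} δ_{y,j}] = m² / (n_x n_y)`. The indicators are therefore uncorrelated, and by
bilinearity so are `W_x` and `W_y`.
-/

open scoped BigOperators

lemma uexp_eq_expect {α : Type*} (s : Finset α) (f : α → ℝ) : uexp s f = 𝔼 a ∈ s, f a :=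
  (expect_eq_sum_div_card s f).symm

lemma fcov_eq_uexp_mul_sub {α : Type*} (s : Finset α) (f g : α → ℝ) :
    fcov s f g = uexp s (fun a => f a * g a) - uexp s f * uexp s g := by
  rcases s.eq_empty_or_nonempty with rfl | hs
  · simp [fcov, uexp]
  simp only [fcov, uexp_eq_expect, sub_mul, mul_sub, expect_sub_distrib, ← expect_mul,
    ← mul_expect, expect_const hs]
  ring

lemma uexp_sum_mul_sum_of_uncorrelated {α ι κ : Type*} [Fintype ι] [Fintype κ]
    (s : Finset α) (f : ι → α → ℝ) (g : κ → α → ℝ) (x : ι → ℝ) (y : κ → ℝ)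
    (h : ∀ i j, uexp s (fun a => f i a * g j a) = uexp s (f i) * uexp s (g j)) :
    uexp s (fun a => (∑ i, f i a * x i) * ∑ j, g j a * y j)
      = uexp s (fun a => ∑ i, f i a * x i) * uexp s (fun a => ∑ j, g j a * y j) := by
  simp only [uexp_eq_expect] at h ⊢
  calc 𝔼 a ∈ s, (∑ i, f i a * x i) * ∑ j, g j a * y j
      = ∑ i, ∑ j, (𝔼 a ∈ s, f i a * g j a) * (x i * y j) := by
        simp only [sum_mul_sum, expect_sum_comm, expect_mul]
        exact sum_congr rfl fun i _ => sum_congr rfl fun j _ => expect_congr rfl fun a _ => by ring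
    _ = (∑ i, (𝔼 a ∈ s, f i a) * x i) * ∑ j, (𝔼 a ∈ s, g j a) * y j := by
        simp only [h, sum_mul_sum]
        exact sum_congr rfl fun i _ => sum_congr rfl fun j _ => by ring
    _ = _ := by simp only [expect_sum_comm, expect_mul]

section BlockPerm

variable {nx ny : ℕ}

def blockPerm (σ : Equiv.Perm (Fin nx)) (τ : Equiv.Perm (Fin ny)) : Equiv.Perm (Fin (nx + ny)) :=
  finSumFinEquiv.permCongr (σ.sumCongr τ)

@[simp]
lemma blockPerm_castAdd (σ : Equiv.Perm (Fin nx)) (τ : Equiv.Perm (Fin ny)) (i : Fin nx) :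
    blockPerm σ τ (Fin.castAdd ny i) = Fin.castAdd ny (σ i) := by
  simp [blockPerm, Equiv.permCongr_apply]

@[simp]
lemma blockPerm_natAdd (σ : Equiv.Perm (Fin nx)) (τ : Equiv.Perm (Fin ny)) (j : Fin ny) :
    blockPerm σ τ (Fin.natAdd nx j) = Fin.natAdd nx (τ j) := by
  simp [blockPerm, Equiv.permCongr_apply]

variable (π : Equiv.Perm (Fin (nx + ny))) (σ : Equiv.Perm (Fin nx)) (τ : Equiv.Perm (Fin ny))

lemma deltaX_mul_blockPerm (i : Fin nx) :
    deltaX nx ny (π * blockPerm σ τ) i = deltaX nx ny π (σ i) := by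
  simp [deltaX]

lemma deltaY_mul_blockPerm (j : Fin ny) :
    deltaY nx ny (π * blockPerm σ τ) j = deltaY nx ny π (τ j) := by
  simp [deltaY]

lemma pdist_mul_blockPerm : pdist nx ny (π * blockPerm σ τ) = pdist nx ny π := by
  simp only [pdist, Equiv.Perm.mul_apply, blockPerm_castAdd]
  congr 1
  exact card_equiv σ (by simp)

lemma sum_partM_mul_blockPerm (m : ℕ) (f : Equiv.Perm (Fin (nx + ny)) → ℝ) :
    ∑ π ∈ PartM nx ny m, f (π * blockPerm σ τ) = ∑ π ∈ PartM nx ny m, f π :=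
  sum_equiv (Equiv.mulRight (blockPerm σ τ)) (by simp [PartM, pdist_mul_blockPerm]) (by simp)

end BlockPerm

section Conservation

variable {nx ny : ℕ} (π : Equiv.Perm (Fin (nx + ny)))

lemma card_stay_add_card_enter :
    #{i : Fin nx | (π (Fin.castAdd ny i) : ℕ) < nx} + #{j : Fin ny | (π (Fin.natAdd nx j) : ℕ) < nx}
      = nx := by
  simp only [card_filter]
  rw [← Fin.sum_univ_add (fun k => if (π k : ℕ) < nx then 1 else 0),
    Equiv.sum_comp π (fun k => if (k : ℕ) < nx then 1 else 0), Fin.sum_univ_add]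
  simp

lemma sum_deltaX_eq_pdist : ∑ i, deltaX nx ny π i = pdist nx ny π := by
  have h := card_filter_add_card_filter_not (s := univ)
    (fun i : Fin nx => (π (Fin.castAdd ny i) : ℕ) < nx)
  simp only [card_univ, Fintype.card_fin, not_lt] at h
  simp only [deltaX, sum_boole, pdist]
  rw [Nat.cast_inj]
  omega

lemma sum_deltaY_eq_pdist : ∑ j, deltaY nx ny π j = pdist nx ny π := by
  have h := card_stay_add_card_enter π
  simp only [deltaY, sum_boole, pdist]
  rw [Nat.cast_inj]
  omega

end Conservation

section Exchangeability

variable {nx ny m : ℕ}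

lemma sum_partM_deltaX_eq (i i' : Fin nx) :
    ∑ π ∈ PartM nx ny m, deltaX nx ny π i = ∑ π ∈ PartM nx ny m, deltaX nx ny π i' := by
  rw [← sum_partM_mul_blockPerm (Equiv.swap i i') 1]
  simp [deltaX_mul_blockPerm]

lemma sum_partM_deltaY_eq (j j' : Fin ny) :
    ∑ π ∈ PartM nx ny m, deltaY nx ny π j = ∑ π ∈ PartM nx ny m, deltaY nx ny π j' := by
  rw [← sum_partM_mul_blockPerm 1 (Equiv.swap j j')]
  simp [deltaY_mul_blockPerm]

lemma sum_partM_deltaX_mul_deltaY_eq (i i' : Fin nx) (j j' : Fin ny) :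
    ∑ π ∈ PartM nx ny m, deltaX nx ny π i * deltaY nx ny π j
      = ∑ π ∈ PartM nx ny m, deltaX nx ny π i' * deltaY nx ny π j' := by
  rw [← sum_partM_mul_blockPerm (Equiv.swap i i') (Equiv.swap j j')]
  simp [deltaX_mul_blockPerm, deltaY_mul_blockPerm]

lemma sum_deltaX_of_mem_partM {π : Equiv.Perm (Fin (nx + ny))} (hπ : π ∈ PartM nx ny m) :
    ∑ i, deltaX nx ny π i = m := by
  rw [sum_deltaX_eq_pdist, (mem_filter.1 hπ).2]

lemma sum_deltaY_of_mem_partM {π : Equiv.Perm (Fin (nx + ny))} (hπ : π ∈ PartM nx ny m) :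
    ∑ j, deltaY nx ny π j = m := by
  rw [sum_deltaY_eq_pdist, (mem_filter.1 hπ).2]

lemma natCast_mul_sum_partM_deltaX (i : Fin nx) :
    (nx : ℝ) * ∑ π ∈ PartM nx ny m, deltaX nx ny π i = m * #(PartM nx ny m) :=
  calc (nx : ℝ) * ∑ π ∈ PartM nx ny m, deltaX nx ny π i
      = ∑ i', ∑ π ∈ PartM nx ny m, deltaX nx ny π i' := by
        simp [sum_partM_deltaX_eq _ i]
    _ = ∑ π ∈ PartM nx ny m, (m : ℝ) := by
        rw [sum_comm]
        exact sum_congr rfl fun π hπ => sum_deltaX_of_mem_partM hπ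
    _ = m * #(PartM nx ny m) := by simp [mul_comm]

lemma natCast_mul_sum_partM_deltaY (j : Fin ny) :
    (ny : ℝ) * ∑ π ∈ PartM nx ny m, deltaY nx ny π j = m * #(PartM nx ny m) :=
  calc (ny : ℝ) * ∑ π ∈ PartM nx ny m, deltaY nx ny π j
      = ∑ j', ∑ π ∈ PartM nx ny m, deltaY nx ny π j' := by
        simp [sum_partM_deltaY_eq _ j]
    _ = ∑ π ∈ PartM nx ny m, (m : ℝ) := by
        rw [sum_comm]
        exact sum_congr rfl fun π hπ => sum_deltaY_of_mem_partM hπ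
    _ = m * #(PartM nx ny m) := by simp [mul_comm]

lemma natCast_mul_sum_partM_deltaX_mul_deltaY (i : Fin nx) (j : Fin ny) :
    (nx * ny : ℝ) * ∑ π ∈ PartM nx ny m, deltaX nx ny π i * deltaY nx ny π j
      = m * m * #(PartM nx ny m) :=
  calc (nx * ny : ℝ) * ∑ π ∈ PartM nx ny m, deltaX nx ny π i * deltaY nx ny π j
      = ∑ i', ∑ j', ∑ π ∈ PartM nx ny m, deltaX nx ny π i' * deltaY nx ny π j' := by
        simp [sum_partM_deltaX_mul_deltaY_eq _ i _ j, mul_assoc]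
    _ = ∑ π ∈ PartM nx ny m, (m * m : ℝ) := by
        rw [sum_congr rfl fun i' _ => sum_comm, sum_comm]
        refine sum_congr rfl fun π hπ => ?_
        rw [← sum_mul_sum, sum_deltaX_of_mem_partM hπ, sum_deltaY_of_mem_partM hπ]
    _ = m * m * #(PartM nx ny m) := by simp [mul_comm]

end Exchangeability

lemma uexp_partM_deltaX_mul_deltaY {nx ny m : ℕ} (i : Fin nx) (j : Fin ny) :
    uexp (PartM nx ny m) (fun π => deltaX nx ny π i * deltaY nx ny π j)
      = uexp (PartM nx ny m) (deltaX nx ny · i) * uexp (PartM nx ny m) (deltaY nx ny · j) := by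
  have hnx : (nx : ℝ) ≠ 0 := by have := i.pos; positivity
  have hny : (ny : ℝ) ≠ 0 := by have := j.pos; positivity
  have hX := natCast_mul_sum_partM_deltaX (ny := ny) (m := m) i
  have hY := natCast_mul_sum_partM_deltaY (nx := nx) (m := m) j
  have hXY := natCast_mul_sum_partM_deltaX_mul_deltaY (m := m) i j
  simp only [uexp]
  rcases eq_or_ne (#(PartM nx ny m) : ℝ) 0 with hc | hc
  · simp [hc]
  field_simp
  -- after multiplying by `nx * ny`, both sides are `(m * #Π(m))²`
  apply mul_left_cancel₀ (mul_ne_zero hnx hny)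
  linear_combination (#(PartM nx ny m) : ℝ) * hXY
    - (ny * ∑ π ∈ PartM nx ny m, deltaY nx ny π j) * hX - (m * #(PartM nx ny m) : ℝ) * hY

theorem W_cov_zero_general (nx ny : ℕ)
    (x : Fin nx → ℝ) (y : Fin ny → ℝ)
    (m : ℕ) :
    uexp (PartM nx ny m) (fun π => Wx nx ny x π * Wy nx ny y π)
        = uexp (PartM nx ny m) (Wx nx ny x) * uexp (PartM nx ny m) (Wy nx ny y)
    ∧ fcov (PartM nx ny m) (Wx nx ny x) (Wy nx ny y) = 0 := by
  have hcorr : uexp (PartM nx ny m) (fun π => Wx nx ny x π * Wy nx ny y π)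
      = uexp (PartM nx ny m) (Wx nx ny x) * uexp (PartM nx ny m) (Wy nx ny y) :=
    uexp_sum_mul_sum_of_uncorrelated _ (fun i π => deltaX nx ny π i)
      (fun j π => deltaY nx ny π j) x y uexp_partM_deltaX_mul_deltaY
  exact ⟨hcorr, by rw [fcov_eq_uexp_mul_sub, hcorr, sub_self]⟩

/-- under the uniform distribution on `Π(m)`,
`E[W_x W_y] = E[W_x] E[W_y]`, that is, `Cov(W_x, W_y) = 0`. -/
theorem W_cov_zero (nx ny : ℕ) (hx : 1 ≤ nx) (hy : 1 ≤ ny)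
    (x : Fin nx → ℝ) (y : Fin ny → ℝ)
    (m : ℕ) (hm : m ≤ min nx ny) :
    uexp (PartM nx ny m) (fun π => Wx nx ny x π * Wy nx ny y π)
        = uexp (PartM nx ny m) (Wx nx ny x) * uexp (PartM nx ny m) (Wy nx ny y)
    ∧ fcov (PartM nx ny m) (Wx nx ny x) (Wy nx ny y) = 0 :=
  W_cov_zero_general nx ny x y m
end

section
/- Let n_x, n_y ≥ 2, N = n_x + n_y, fix real data vectors x and y with sample means x̄, ȳ, and fix m with 1 ≤ m ≤ min(n_x, n_y). Let π be uniform on Π(m) and let W(π) = Σ_j δ_{y,j} y_j − Σ_i δ_{x,i} x_i. Then Var(W) = m (n_y − m)/((n_y − 1) n_y) Σ_j (y_j − ȳ)² + m (n_x − m)/((n_x − 1) n_x) Σ_i (x_i − x̄)²; that is, the variance of W equals the sum of the variances of its two exchange sums. -/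
/-! Send `π ∈ Π(m)` to its exchange sets `(B, A)`: the y-observations it moves into group x
and the x-observations it moves out. The fibre over `(B, A)` is the set of permutations
carrying a fixed `nx`-set onto the first block, a coset of a stabiliser, so all fibres have
the same size and the uniform law on `Π(m)` becomes the uniform law on pairs of `m`-subsets.
Under it `B` and `A` are independent, whence `Var W = Var W_y + Var W_x`, and each term is
the variance `m (n - m) / (n (n - 1)) ∑ (vᵢ - v̄)²` of the sum of a sample of size `m` drawn
without replacement from `n` values. -/

open Finset

section UniformExpectation

variable {α β : Type*}

lemma uexp_add (s : Finset α) (f g : α → ℝ) :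
    uexp s (fun a => f a + g a) = uexp s f + uexp s g := by
  simp only [uexp, sum_add_distrib, add_div]

lemma uexp_sub (s : Finset α) (f g : α → ℝ) :
    uexp s (fun a => f a - g a) = uexp s f - uexp s g := by
  simp only [uexp, sum_sub_distrib, sub_div]

lemma uexp_const_mul (s : Finset α) (c : ℝ) (f : α → ℝ) :
    uexp s (fun a => c * f a) = c * uexp s f := by
  simp only [uexp, ← mul_sum, mul_div_assoc]

lemma uexp_const {s : Finset α} (hs : s.Nonempty) (c : ℝ) : uexp s (fun _ => c) = c := by
  have : (#s : ℝ) ≠ 0 := by exact_mod_cast hs.card_ne_zero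
  simp only [uexp, sum_const, nsmul_eq_mul]
  field_simp

lemma fvar_eq_uexp_sq_sub_sq (s : Finset α) (f : α → ℝ) :
    fvar s f = uexp s (fun a => f a ^ 2) - uexp s f ^ 2 := by
  rcases s.eq_empty_or_nonempty with rfl | hs
  · simp [fvar, uexp]
  have hsq : (fun a => (f a - uexp s f) ^ 2)
      = fun a => (f a ^ 2 + uexp s f ^ 2) - 2 * uexp s f * f a := by
    funext a; ring
  rw [fvar, hsq, uexp_sub, uexp_add, uexp_const hs, uexp_const_mul]
  ring

lemma uexp_comp_of_card_fiber_eq [DecidableEq β] {s : Finset α} {t : Finset β} {φ : α → β}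
    (hφ : ∀ a ∈ s, φ a ∈ t) {k : ℕ} (hk : k ≠ 0) (hfib : ∀ b ∈ t, #{a ∈ s | φ a = b} = k)
    (f : β → ℝ) : uexp s (f ∘ φ) = uexp t f := by
  have hsum : ∑ a ∈ s, f (φ a) = k * ∑ b ∈ t, f b := by
    rw [← sum_fiberwise_of_maps_to hφ, mul_sum]
    refine sum_congr rfl fun b hb => ?_
    rw [sum_congr rfl fun a ha => congrArg f (mem_filter.1 ha).2, sum_const, hfib b hb,
      nsmul_eq_mul]
  have hcard : (#s : ℝ) = k * #t := by
    rw [card_eq_sum_card_fiberwise hφ, sum_congr rfl hfib, sum_const, smul_eq_mul]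
    push_cast; ring
  have hk' : (k : ℝ) ≠ 0 := by exact_mod_cast hk
  simp only [uexp, Function.comp, hsum, hcard, mul_div_mul_left _ _ hk']

lemma fvar_comp_of_card_fiber_eq [DecidableEq β] {s : Finset α} {t : Finset β} {φ : α → β}
    (hφ : ∀ a ∈ s, φ a ∈ t) {k : ℕ} (hk : k ≠ 0) (hfib : ∀ b ∈ t, #{a ∈ s | φ a = b} = k)
    (f : β → ℝ) : fvar s (f ∘ φ) = fvar t f := by
  rw [fvar, uexp_comp_of_card_fiber_eq hφ hk hfib f]
  exact uexp_comp_of_card_fiber_eq hφ hk hfib (fun b => (f b - uexp t f) ^ 2)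

lemma uexp_prod_mul (s : Finset α) (t : Finset β) (f : α → ℝ) (g : β → ℝ) :
    uexp (s ×ˢ t) (fun p => f p.1 * g p.2) = uexp s f * uexp t g := by
  simp only [uexp, sum_product, ← mul_sum, ← sum_mul, card_product, Nat.cast_mul,
    mul_div_mul_comm]

lemma uexp_prod_fst (s : Finset α) {t : Finset β} (ht : t.Nonempty) (f : α → ℝ) :
    uexp (s ×ˢ t) (fun p => f p.1) = uexp s f := by
  simpa [uexp_const ht] using uexp_prod_mul s t f (fun _ => 1)

lemma uexp_prod_snd {s : Finset α} (hs : s.Nonempty) (t : Finset β) (g : β → ℝ) :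
    uexp (s ×ˢ t) (fun p => g p.2) = uexp t g := by
  simpa [uexp_const hs] using uexp_prod_mul s t (fun _ => 1) g

lemma fvar_prod_fst (s : Finset α) {t : Finset β} (ht : t.Nonempty) (f : α → ℝ) :
    fvar (s ×ˢ t) (fun p => f p.1) = fvar s f := by
  rw [fvar, uexp_prod_fst s ht]
  exact uexp_prod_fst s ht (fun a => (f a - uexp s f) ^ 2)

lemma fvar_prod_snd {s : Finset α} (hs : s.Nonempty) (t : Finset β) (g : β → ℝ) :
    fvar (s ×ˢ t) (fun p => g p.2) = fvar t g := by
  rw [fvar, uexp_prod_snd hs t]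
  exact uexp_prod_snd hs t (fun b => (g b - uexp t g) ^ 2)

lemma fvar_prod_sub {s : Finset α} {t : Finset β} (hs : s.Nonempty) (ht : t.Nonempty)
    (f : α → ℝ) (g : β → ℝ) :
    fvar (s ×ˢ t) (fun p => f p.1 - g p.2) = fvar s f + fvar t g := by
  have hsq : (fun p : α × β => (f p.1 - g p.2) ^ 2)
      = fun p => (f p.1 ^ 2 + g p.2 ^ 2) - 2 * (f p.1 * g p.2) := by
    funext p; ring
  rw [fvar_eq_uexp_sq_sub_sq, hsq, uexp_sub, uexp_add, uexp_const_mul, uexp_prod_mul,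
    uexp_sub, uexp_prod_fst s ht f, uexp_prod_fst s ht (fun a => f a ^ 2), uexp_prod_snd hs t g,
    uexp_prod_snd hs t (fun b => g b ^ 2),
    fvar_eq_uexp_sq_sub_sq s, fvar_eq_uexp_sq_sub_sq t]
  ring

end UniformExpectation

section SubsetSums

variable {α : Type*} [Fintype α] [DecidableEq α]

lemma descFactorial_mul_card_filter_superset (u : Finset α) (m : ℕ) :
    (Fintype.card α).descFactorial #u * #{s ∈ powersetCard m (univ : Finset α) | u ⊆ s}
      = m.descFactorial #u * (Fintype.card α).choose m := by
  by_cases hu : #u ≤ m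
  · rw [card_filter_powersetCard_subset u univ m (subset_univ u) hu, card_univ,
      Nat.descFactorial_eq_factorial_mul_choose, Nat.descFactorial_eq_factorial_mul_choose,
      mul_assoc, mul_assoc, ← Nat.choose_mul hu, mul_comm (m.choose _)]
  · have hempty : {s ∈ powersetCard m (univ : Finset α) | u ⊆ s} = ∅ := by
      refine filter_false_of_mem fun s hs hus => hu ?_
      exact (mem_powersetCard_univ.1 hs) ▸ card_le_card hus
    rw [hempty, card_empty, (Nat.descFactorial_eq_zero_iff_lt).2 (not_le.1 hu)]
    simp

lemma card_mul_card_filter_mem (m : ℕ) (i : α) :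
    (Fintype.card α : ℝ) * #{s ∈ powersetCard m (univ : Finset α) | i ∈ s}
      = m * (Fintype.card α).choose m := by
  have h := descFactorial_mul_card_filter_superset {i} m
  simp only [card_singleton, Nat.descFactorial_one, singleton_subset_iff] at h
  exact_mod_cast h

lemma card_mul_card_filter_pair_subset (m : ℕ) (i j : α) :
    (Fintype.card α : ℝ) * (Fintype.card α - 1)
        * #{s ∈ powersetCard m (univ : Finset α) | {i, j} ⊆ s}
      = if i = j then ((Fintype.card α : ℝ) - 1) * (m * (Fintype.card α).choose m)
        else (m : ℝ) * (m - 1) * (Fintype.card α).choose m := by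
  split_ifs with hij
  · subst hij
    simp only [insert_eq_self.2 (mem_singleton_self i), singleton_subset_iff]
    rw [mul_right_comm, card_mul_card_filter_mem, mul_comm]
  · have h := descFactorial_mul_card_filter_superset {i, j} m
    rw [card_pair hij] at h
    have h' := congrArg (Nat.cast : ℕ → ℝ) h
    push_cast [Nat.cast_descFactorial_two] at h'
    exact h'

lemma sum_sum_ite_eq_mul_mul (v : α → ℝ) (a b : ℝ) :
    ∑ i, ∑ j, (if i = j then a else b) * (v i * v j)
      = (a - b) * ∑ i, v i ^ 2 + b * (∑ i, v i) ^ 2 := by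
  have hsplit : ∀ i j : α, (if i = j then a else b) * (v i * v j)
      = (if i = j then (a - b) * v i ^ 2 else 0) + b * (v i * v j) := by
    intro i j
    split_ifs with h
    · subst h; ring
    · ring
  simp only [hsplit, sum_add_distrib, sum_ite_eq, mem_univ, if_true, ← mul_sum, sq,
    sum_mul_sum]

lemma card_mul_sum_powersetCard_sum (m : ℕ) (v : α → ℝ) :
    (Fintype.card α : ℝ) * ∑ s ∈ powersetCard m (univ : Finset α), ∑ i ∈ s, v i
      = m * (Fintype.card α).choose m * ∑ i, v i := by
  have hswap : ∑ s ∈ powersetCard m (univ : Finset α), ∑ i ∈ s, v i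
      = ∑ i, #{s ∈ powersetCard m (univ : Finset α) | i ∈ s} * v i := by
    rw [sum_comm' (t' := univ) (s' := fun i => {s ∈ powersetCard m univ | i ∈ s})
      (fun s i => by simp [and_comm])]
    simp only [sum_const, nsmul_eq_mul]
  rw [hswap, mul_sum, mul_sum]
  refine sum_congr rfl fun i _ => ?_
  rw [← mul_assoc, card_mul_card_filter_mem]

lemma card_mul_sum_powersetCard_sum_sq (m : ℕ) (v : α → ℝ) :
    (Fintype.card α : ℝ) * (Fintype.card α - 1)
        * ∑ s ∈ powersetCard m (univ : Finset α), (∑ i ∈ s, v i) ^ 2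
      = m * (Fintype.card α - m) * (Fintype.card α).choose m * ∑ i, v i ^ 2
        + m * (m - 1) * (Fintype.card α).choose m * (∑ i, v i) ^ 2 := by
  have hswap : ∑ s ∈ powersetCard m (univ : Finset α), (∑ i ∈ s, v i) ^ 2
      = ∑ i, ∑ j, #{s ∈ powersetCard m (univ : Finset α) | {i, j} ⊆ s} * (v i * v j) := by
    simp only [sq, sum_mul_sum, ← sum_product']
    rw [sum_comm' (t' := univ ×ˢ univ)
      (s' := fun p => {s ∈ powersetCard m univ | {p.1, p.2} ⊆ s})
      (fun s p => by simp [insert_subset_iff, and_comm])]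
    simp only [sum_const, nsmul_eq_mul]
  have hterm : ∀ i j : α, (Fintype.card α : ℝ) * (Fintype.card α - 1)
      * (#{s ∈ powersetCard m (univ : Finset α) | {i, j} ⊆ s} * (v i * v j))
      = (if i = j then ((Fintype.card α : ℝ) - 1) * (m * (Fintype.card α).choose m)
        else (m : ℝ) * (m - 1) * (Fintype.card α).choose m) * (v i * v j) := by
    intro i j
    rw [← mul_assoc, card_mul_card_filter_pair_subset]
  calc _ = ∑ i, ∑ j, (if i = j
            then ((Fintype.card α : ℝ) - 1) * (m * (Fintype.card α).choose m)
            else (m : ℝ) * (m - 1) * (Fintype.card α).choose m) * (v i * v j) := by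
        simp only [hswap, mul_sum, hterm]
    _ = _ := by rw [sum_sum_ite_eq_mul_mul]; ring

lemma fvar_powersetCard_sum (hn : 1 < Fintype.card α) {m : ℕ} (hm : m ≤ Fintype.card α)
    (v : α → ℝ) :
    fvar (powersetCard m (univ : Finset α)) (fun s => ∑ i ∈ s, v i)
      = m * ((Fintype.card α - m) / ((Fintype.card α - 1) * Fintype.card α))
        * ∑ i, (v i - (∑ k, v k) / Fintype.card α) ^ 2 := by
  have hE1₀ := card_mul_sum_powersetCard_sum m v
  have hE2₀ := card_mul_sum_powersetCard_sum_sq m v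
  set n := Fintype.card α with hn_def
  have hn0 : (n : ℝ) ≠ 0 := by positivity
  have hn1 : (n : ℝ) - 1 ≠ 0 := sub_ne_zero.2 (by exact_mod_cast hn.ne')
  have hC : (n.choose m : ℝ) ≠ 0 := by exact_mod_cast (Nat.choose_pos hm).ne'
  have hE1 := eq_div_of_mul_eq hn0 ((mul_comm _ _).trans hE1₀)
  have hE2 := eq_div_of_mul_eq (mul_ne_zero hn0 hn1) ((mul_comm _ _).trans hE2₀)
  have hdev : ∑ i, (v i - (∑ k, v k) / n) ^ 2 = ∑ i, v i ^ 2 - (∑ i, v i) ^ 2 / n := by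
    simp only [sub_sq, sum_add_distrib, sum_sub_distrib, ← sum_mul, ← mul_sum, sum_const,
      card_univ, ← hn_def, nsmul_eq_mul]
    field_simp
    ring
  rw [fvar_eq_uexp_sq_sub_sq, uexp, uexp, card_powersetCard, card_univ, ← hn_def, hE1, hE2,
    hdev]
  field_simp
  ring

end SubsetSums

section PermutationsOfFinsets

open scoped Pointwise

variable {α : Type*} [DecidableEq α]

lemma exists_perm_smul_finset_eq {S T : Finset α} (h : #S = #T) :
    ∃ ρ : Equiv.Perm α, ρ • S = T := by
  obtain ⟨ρ, hρ⟩ := (Set.powersetCard.isPretransitive (α := α) (n := #T)).exists_smul_eq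
    ⟨S, h⟩ ⟨T, rfl⟩
  exact ⟨ρ, congrArg Subtype.val hρ⟩

lemma card_perm_smul_finset_eq_of_card_eq [Fintype α] {S S' : Finset α} (T : Finset α)
    (h : #S = #S') :
    #{π : Equiv.Perm α | π • S = T} = #{π : Equiv.Perm α | π • S' = T} := by
  obtain ⟨ρ, hρ⟩ := exists_perm_smul_finset_eq h.symm
  exact card_equiv (Equiv.mulRight ρ) fun π => by simp [mul_smul, hρ]

end PermutationsOfFinsets

section TwoSample

open scoped Pointwise

variable {nx ny : ℕ}

def exchangedX (π : Equiv.Perm (Fin (nx + ny))) : Finset (Fin nx) :=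
  {i | nx ≤ (π (Fin.castAdd ny i) : ℕ)}

def exchangedY (π : Equiv.Perm (Fin (nx + ny))) : Finset (Fin ny) :=
  {j | (π (Fin.natAdd nx j) : ℕ) < nx}

lemma Wx_eq_sum_exchangedX (x : Fin nx → ℝ) (π : Equiv.Perm (Fin (nx + ny))) :
    Wx nx ny x π = ∑ i ∈ exchangedX π, x i := by
  simp only [Wx, deltaX, exchangedX, ite_mul, one_mul, zero_mul, sum_filter]

lemma Wy_eq_sum_exchangedY (y : Fin ny → ℝ) (π : Equiv.Perm (Fin (nx + ny))) :
    Wy nx ny y π = ∑ j ∈ exchangedY π, y j := by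
  simp only [Wy, deltaY, exchangedY, ite_mul, one_mul, zero_mul, sum_filter]

lemma card_filter_castAdd_lt_add_card_exchangedX (π : Equiv.Perm (Fin (nx + ny))) :
    #{i : Fin nx | (π (Fin.castAdd ny i) : ℕ) < nx} + #(exchangedX π) = nx := by
  simpa only [exchangedX, not_lt, card_univ, Fintype.card_fin] using
    card_filter_add_card_filter_not (s := univ)
      (fun i : Fin nx => (π (Fin.castAdd ny i) : ℕ) < nx)

lemma pdist_eq_card_exchangedX (π : Equiv.Perm (Fin (nx + ny))) :
    pdist nx ny π = #(exchangedX π) := by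
  have := card_filter_castAdd_lt_add_card_exchangedX π
  unfold pdist
  omega

def lowBlock (nx ny : ℕ) : Finset (Fin (nx + ny)) := {u | (u : ℕ) < nx}

lemma card_lowBlock : #(lowBlock nx ny) = nx := by
  rw [lowBlock, Fin.card_filter_val_lt]
  omega

/-- `π` sends exactly `nx` positions into the first block; count them block by block. -/
lemma card_exchangedY (π : Equiv.Perm (Fin (nx + ny))) :
    #(exchangedY π) = #(exchangedX π) := by
  have hpre : #{u : Fin (nx + ny) | (π u : ℕ) < nx} = nx := by
    refine (card_equiv π fun u => ?_).trans card_lowBlock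
    simp [lowBlock]
  have hsplit := card_filter_castAdd_lt_add_card_exchangedX π
  rw [card_filter, Fin.sum_univ_add, ← card_filter, ← card_filter] at hpre
  rw [exchangedY]
  omega

/-- The positions sent into the first block by every permutation with exchange sets `A`
and `B`. -/
def intoLowBlock (A : Finset (Fin nx)) (B : Finset (Fin ny)) : Finset (Fin (nx + ny)) :=
  (Aᶜ.disjSum B).map finSumFinEquiv.toEmbedding

lemma card_intoLowBlock (A : Finset (Fin nx)) (B : Finset (Fin ny)) :
    #(intoLowBlock A B) = nx - #A + #B := by
  rw [intoLowBlock, card_map, card_disjSum, card_compl, Fintype.card_fin]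

lemma castAdd_mem_intoLowBlock {A : Finset (Fin nx)} {B : Finset (Fin ny)} {i : Fin nx} :
    Fin.castAdd ny i ∈ intoLowBlock A B ↔ i ∉ A := by
  simp [intoLowBlock]

lemma natAdd_mem_intoLowBlock {A : Finset (Fin nx)} {B : Finset (Fin ny)} {j : Fin ny} :
    Fin.natAdd nx j ∈ intoLowBlock A B ↔ j ∈ B := by
  simp [intoLowBlock]

lemma smul_intoLowBlock_eq_lowBlock_iff (π : Equiv.Perm (Fin (nx + ny)))
    (A : Finset (Fin nx)) (B : Finset (Fin ny)) :
    π • intoLowBlock A B = lowBlock nx ny ↔ exchangedX π = A ∧ exchangedY π = B := by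
  rw [← eq_inv_smul_iff, Finset.ext_iff, Fin.forall_fin_add, Finset.ext_iff, Finset.ext_iff]
  simp only [castAdd_mem_intoLowBlock, natAdd_mem_intoLowBlock, mem_inv_smul_finset_iff,
    Equiv.Perm.smul_def, lowBlock, exchangedX, exchangedY, mem_filter, mem_univ, true_and,
    ← not_lt]
  exact and_congr (forall_congr' fun i => by tauto) (forall_congr' fun j => by tauto)

variable {m : ℕ}

lemma fvar_partM_comp (F : Finset (Fin ny) × Finset (Fin nx) → ℝ) :
    fvar (PartM nx ny m) (fun π => F (exchangedY π, exchangedX π))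
      = fvar (powersetCard m univ ×ˢ powersetCard m univ) F := by
  refine fvar_comp_of_card_fiber_eq (k := #{π : Equiv.Perm (Fin (nx + ny)) |
    π • lowBlock nx ny = lowBlock nx ny}) (fun π hπ => ?_) ?_ (fun p hp => ?_) F
  · simp only [PartM, mem_filter, mem_univ, true_and, pdist_eq_card_exchangedX] at hπ
    simp only [mem_product, mem_powersetCard_univ, card_exchangedY, hπ, and_self]
  · exact card_ne_zero.2 ⟨1, by simp⟩
  · obtain ⟨B, A⟩ := p
    simp only [mem_product, mem_powersetCard_univ] at hp
    have hfib : {π ∈ PartM nx ny m | (exchangedY π, exchangedX π) = (B, A)}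
        = ({π | π • intoLowBlock A B = lowBlock nx ny} :
            Finset (Equiv.Perm (Fin (nx + ny)))) := by
      ext π
      simp only [PartM, mem_filter, mem_univ, true_and, pdist_eq_card_exchangedX,
        Prod.ext_iff, smul_intoLowBlock_eq_lowBlock_iff]
      constructor
      · rintro ⟨-, hB, hA⟩
        exact ⟨hA, hB⟩
      · rintro ⟨hA, hB⟩
        exact ⟨hA ▸ hp.2, hB, hA⟩
    rw [hfib]
    refine card_perm_smul_finset_eq_of_card_eq _ ?_
    have : #A ≤ nx := by simpa using card_le_univ A
    rw [card_intoLowBlock, card_lowBlock]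
    omega

lemma fvar_partM_Wy (hmx : m ≤ nx) (y : Fin ny → ℝ) :
    fvar (PartM nx ny m) (Wy nx ny y) = fvar (powersetCard m univ) (fun B => ∑ j ∈ B, y j) := by
  rw [funext (Wy_eq_sum_exchangedY y)]
  exact (fvar_partM_comp fun p => ∑ j ∈ p.1, y j).trans
    (fvar_prod_fst _ (by simpa using hmx) fun B => ∑ j ∈ B, y j)

lemma fvar_partM_Wx (hmy : m ≤ ny) (x : Fin nx → ℝ) :
    fvar (PartM nx ny m) (Wx nx ny x) = fvar (powersetCard m univ) (fun A => ∑ i ∈ A, x i) := by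
  rw [funext (Wx_eq_sum_exchangedX x)]
  exact (fvar_partM_comp fun p => ∑ i ∈ p.2, x i).trans
    (fvar_prod_snd (by simpa using hmy) _ fun A => ∑ i ∈ A, x i)

lemma fvar_partM_Wy_sub_Wx (hmx : m ≤ nx) (hmy : m ≤ ny) (x : Fin nx → ℝ) (y : Fin ny → ℝ) :
    fvar (PartM nx ny m) (fun π => Wy nx ny y π - Wx nx ny x π)
      = fvar (powersetCard m univ) (fun B => ∑ j ∈ B, y j)
        + fvar (powersetCard m univ) (fun A => ∑ i ∈ A, x i) := by
  simp only [Wy_eq_sum_exchangedY, Wx_eq_sum_exchangedX]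
  exact (fvar_partM_comp fun p => ∑ j ∈ p.1, y j - ∑ i ∈ p.2, x i).trans
    (fvar_prod_sub (by simpa using hmy) (by simpa using hmx) (fun B => ∑ j ∈ B, y j)
      fun A => ∑ i ∈ A, x i)

end TwoSample

theorem W_diff_var_general (nx ny : ℕ) (hx : 2 ≤ nx) (hy : 2 ≤ ny)
    (x : Fin nx → ℝ) (y : Fin ny → ℝ)
    (m : ℕ) (hm : m ≤ min nx ny) :
    fvar (PartM nx ny m) (fun π => Wy nx ny y π - Wx nx ny x π)
        = (m : ℝ) * (((ny : ℝ) - m) / (((ny : ℝ) - 1) * ny))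
            * (∑ j, (y j - (∑ k, y k) / ny) ^ 2)
          + (m : ℝ) * (((nx : ℝ) - m) / (((nx : ℝ) - 1) * nx))
            * (∑ i, (x i - (∑ k, x k) / nx) ^ 2)
    ∧ fvar (PartM nx ny m) (fun π => Wy nx ny y π - Wx nx ny x π)
        = fvar (PartM nx ny m) (Wy nx ny y) + fvar (PartM nx ny m) (Wx nx ny x) := by
  have hmx : m ≤ nx := hm.trans (min_le_left nx ny)
  have hmy : m ≤ ny := hm.trans (min_le_right nx ny)
  refine ⟨?_, by rw [fvar_partM_Wy_sub_Wx hmx hmy, fvar_partM_Wy hmx, fvar_partM_Wx hmy]⟩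
  rw [fvar_partM_Wy_sub_Wx hmx hmy,
    fvar_powersetCard_sum (by rwa [Fintype.card_fin]) (by rwa [Fintype.card_fin]),
    fvar_powersetCard_sum (by rwa [Fintype.card_fin]) (by rwa [Fintype.card_fin])]
  simp only [Fintype.card_fin]

/-- under the uniform distribution on `Π(m)`, the variance of
`W = W_y - W_x` equals the sum of the variances of its two exchange sums. -/
theorem W_diff_var (nx ny : ℕ) (hx : 2 ≤ nx) (hy : 2 ≤ ny)
    (x : Fin nx → ℝ) (y : Fin ny → ℝ)
    (m : ℕ) (hm1 : 1 ≤ m) (hm : m ≤ min nx ny) :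
    fvar (PartM nx ny m) (fun π => Wy nx ny y π - Wx nx ny x π)
        = (m : ℝ) * (((ny : ℝ) - m) / (((ny : ℝ) - 1) * ny))
            * (∑ j, (y j - (∑ k, y k) / ny) ^ 2)
          + (m : ℝ) * (((nx : ℝ) - m) / (((nx : ℝ) - 1) * nx))
            * (∑ i, (x i - (∑ k, x k) / nx) ^ 2)
    ∧ fvar (PartM nx ny m) (fun π => Wy nx ny y π - Wx nx ny x π)
        = fvar (PartM nx ny m) (Wy nx ny y) + fvar (PartM nx ny m) (Wx nx ny x) :=
  W_diff_var_general nx ny hx hy x y m hm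
end

section
/- (Permuted means in terms of W.) Let n_x, n_y ≥ 1, N = n_x + n_y, and fix real data z = (x_1,...,x_{n_x}, y_1,...,y_{n_y}) with group sample means x̄ and ȳ. For any permutation π of {1,...,N} with d(π) = m, let z* be the permuted dataset with z*_{π(i)} = z_i, let x̄* be the mean of the first n_x entries of z* and ȳ* the mean of the last n_y entries, and let W(π) = Σ_{j=1}^{n_y} δ_{y,j} y_j − Σ_{i=1}^{n_x} δ_{x,i} x_i. Then x̄* = x̄ + W(π)/n_x and ȳ* = ȳ − W(π)/n_y. Consequently, any statistic of the permuted sample means, R(x̄*, ȳ*), can be written as a function g(W(π)) depending only on W(π) and the observed data. -/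
open Finset

lemma xstar_sum (nx ny : ℕ) (z : Fin (nx + ny) → ℝ) (π : Equiv.Perm (Fin (nx + ny))) :
    ∑ i : Fin nx, z (π.symm (Fin.castAdd ny i))
      = (∑ i : Fin nx, z (Fin.castAdd ny i)) + WZ nx ny z π := by
  have h1 : ∑ k : Fin (nx + ny), (if ((π k : ℕ)) < nx then z k else 0)
      = ∑ i : Fin nx, z (π.symm (Fin.castAdd ny i)) := by
    rw [← Equiv.sum_comp π.symm (fun k => if ((π k : ℕ)) < nx then z k else 0)]
    rw [Fin.sum_univ_add]
    have ha : ∀ i : Fin nx,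
        (if ((π (π.symm (Fin.castAdd ny i)) : ℕ)) < nx then z (π.symm (Fin.castAdd ny i)) else 0)
          = z (π.symm (Fin.castAdd ny i)) := by
      intro i
      simp [Fin.castAdd, Fin.castLE, i.isLt]
    have hb : ∀ j : Fin ny,
        (if ((π (π.symm (Fin.natAdd nx j)) : ℕ)) < nx then z (π.symm (Fin.natAdd nx j)) else 0)
          = 0 := by
      intro j
      simp [Fin.natAdd]
    rw [Finset.sum_congr rfl (fun i _ => ha i), Finset.sum_congr rfl (fun j _ => hb j)]
    simp
  have h2 : ∑ k : Fin (nx + ny), (if ((π k : ℕ)) < nx then z k else 0)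
      = (∑ i : Fin nx, (if ((π (Fin.castAdd ny i) : ℕ)) < nx then z (Fin.castAdd ny i) else 0))
        + ∑ j : Fin ny, (if ((π (Fin.natAdd nx j) : ℕ)) < nx then z (Fin.natAdd nx j) else 0) := by
    rw [Fin.sum_univ_add]
  rw [← h1, h2, WZ]
  have hx : ∀ i : Fin nx,
      (if ((π (Fin.castAdd ny i) : ℕ)) < nx then z (Fin.castAdd ny i) else 0)
        = z (Fin.castAdd ny i) - deltaX nx ny π i * z (Fin.castAdd ny i) := by
    intro i
    by_cases h : ((π (Fin.castAdd ny i) : ℕ)) < nx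
    · simp [deltaX, h, not_le.mpr h]
    · simp [deltaX, h, not_lt.mp h]
  have hy : ∀ j : Fin ny,
      (if ((π (Fin.natAdd nx j) : ℕ)) < nx then z (Fin.natAdd nx j) else 0)
        = deltaY nx ny π j * z (Fin.natAdd nx j) := by
    intro j
    by_cases h : ((π (Fin.natAdd nx j) : ℕ)) < nx
    · simp [deltaY, h]
    · simp [deltaY, h]
  rw [Finset.sum_congr rfl (fun i _ => hx i), Finset.sum_congr rfl (fun j _ => hy j),
    Finset.sum_sub_distrib]
  ring

lemma ystar_sum (nx ny : ℕ) (z : Fin (nx + ny) → ℝ) (π : Equiv.Perm (Fin (nx + ny))) :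
    ∑ j : Fin ny, z (π.symm (Fin.natAdd nx j))
      = (∑ j : Fin ny, z (Fin.natAdd nx j)) - WZ nx ny z π := by
  have htot : (∑ i : Fin nx, z (π.symm (Fin.castAdd ny i)))
      + (∑ j : Fin ny, z (π.symm (Fin.natAdd nx j)))
      = (∑ i : Fin nx, z (Fin.castAdd ny i)) + ∑ j : Fin ny, z (Fin.natAdd nx j) := by
    rw [← Fin.sum_univ_add (fun i => z (π.symm i)), ← Fin.sum_univ_add (fun i => z i)]
    exact Equiv.sum_comp π.symm z
  have := xstar_sum nx ny z π
  linarith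

/-- the permuted group means satisfy `x̄* = x̄ + W(π)/nx` and
`ȳ* = ȳ - W(π)/ny`; consequently any statistic of the permuted means is a
function of `W(π)` alone (given the observed data). -/
theorem permuted_means_via_W (nx ny : ℕ) (hx : 1 ≤ nx) (hy : 1 ≤ ny)
    (z : Fin (nx + ny) → ℝ) :
    (∀ (m : ℕ) (π : Equiv.Perm (Fin (nx + ny))), pdist nx ny π = m →
      xstar nx ny z π = (∑ i : Fin nx, z (Fin.castAdd ny i)) / nx + WZ nx ny z π / nx
      ∧ ystar nx ny z π = (∑ j : Fin ny, z (Fin.natAdd nx j)) / ny - WZ nx ny z π / ny)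
    ∧ ∀ R : ℝ → ℝ → ℝ, ∃ g : ℝ → ℝ,
        ∀ π : Equiv.Perm (Fin (nx + ny)),
          R (xstar nx ny z π) (ystar nx ny z π) = g (WZ nx ny z π) := by
  have key : ∀ π : Equiv.Perm (Fin (nx + ny)),
      xstar nx ny z π = (∑ i : Fin nx, z (Fin.castAdd ny i)) / nx + WZ nx ny z π / nx
      ∧ ystar nx ny z π = (∑ j : Fin ny, z (Fin.natAdd nx j)) / ny - WZ nx ny z π / ny := by
    intro π
    constructor
    · rw [xstar, xstar_sum, add_div]
    · rw [ystar, ystar_sum, sub_div]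
  refine ⟨fun m π _ => key π, fun R => ?_⟩
  refine ⟨fun w => R ((∑ i : Fin nx, z (Fin.castAdd ny i)) / nx + w / nx)
    ((∑ j : Fin ny, z (Fin.natAdd nx j)) / ny - w / ny), fun π => ?_⟩
  rw [(key π).1, (key π).2]
end
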